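/- arXiv:1305.5777 — 10 statements merged into one kernel-verified Lean document; each statement's English description precedes it below -/
import Mathlib

section
/- If a vector x in R^N is s-sparse and A in R^{m×N} satisfies the null space property of order s, then x is the unique solution of the minimization problem min{||z||_1 : Az = Ax}. -/
/-- A vector is `s`-sparse if it has at most `s` nonzero entries. -/
def SparseVec {n : ℕ} (s : ℕ) (x : Fin n → ℝ) : Prop :=
  (Finset.univ.filter fun i => x i ≠ 0).card ≤ s

/-- The null space property of order `s`. -/
def NSP {m n : ℕ} (s : ℕ) (A : Matrix (Fin m) (Fin n) ℝ) : Prop :=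
  ∀ w : Fin n → ℝ, A.mulVec w = 0 → w ≠ 0 →
    ∀ S : Finset (Fin n), S.card = s →
      ∑ i ∈ S, |w i| < ∑ i ∈ Sᶜ, |w i|

/-- If `x` is `s`-sparse and `A` satisfies NSP of order `s`, then `x` is the unique
solution of `min ‖z‖₁ subject to A z = A x`. -/
theorem sparse_unique_l1_minimizer {m N s : ℕ} (hs : s ≤ N)
    (x : Fin N → ℝ) (A : Matrix (Fin m) (Fin N) ℝ)
    (hx : SparseVec s x) (hA : NSP s A) :
    ∀ z : Fin N → ℝ, A.mulVec z = A.mulVec x → z ≠ x →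
      ∑ i, |x i| < ∑ i, |z i| := by
  intro z hz hzx
  set w : Fin N → ℝ := x - z with hw
  have hAw : A.mulVec w = 0 := by
    rw [hw, Matrix.mulVec_sub, hz, sub_self]
  have hwne : w ≠ 0 := by
    intro h
    exact hzx (by funext i; have := congrFun h i; simp [hw] at this; linarith)
  obtain ⟨S, hSsub, -, hScard⟩ :=
    Finset.exists_subsuperset_card_eq
      (t := (Finset.univ : Finset (Fin N)))
      (Finset.subset_univ (Finset.univ.filter fun i => x i ≠ 0)) hx
      (by simpa using hs)
  have hnsp := hA w hAw hwne S hScard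
  -- on Sᶜ, x i = 0
  have hxSc : ∀ i ∈ Sᶜ, x i = 0 := by
    intro i hi
    by_contra h
    exact (Finset.mem_compl.mp hi) (hSsub (Finset.mem_filter.mpr ⟨Finset.mem_univ i, h⟩))
  have key1 : ∑ i ∈ S, |x i| ≤ ∑ i ∈ S, |w i| + ∑ i ∈ S, |z i| := by
    rw [← Finset.sum_add_distrib]
    apply Finset.sum_le_sum
    intro i _
    have : x i = w i + z i := by simp [hw]
    rw [this]
    exact abs_add_le _ _
  have key2 : ∀ i ∈ Sᶜ, |w i| = |z i| := by
    intro i hi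
    have : w i = -z i := by simp [hw, hxSc i hi]
    rw [this, abs_neg]
  have hsum : ∑ i, |x i| = ∑ i ∈ S, |x i| := by
    rw [← Finset.sum_add_sum_compl S fun i => |x i|]
    have : ∑ i ∈ Sᶜ, |x i| = 0 := Finset.sum_eq_zero fun i hi => by rw [hxSc i hi]; simp
    rw [this, add_zero]
  have hsumz : ∑ i, |z i| = ∑ i ∈ S, |z i| + ∑ i ∈ Sᶜ, |z i| :=
    (Finset.sum_add_sum_compl S fun i => |z i|).symm
  rw [hsum, hsumz]
  calc ∑ i ∈ S, |x i| ≤ ∑ i ∈ S, |w i| + ∑ i ∈ S, |z i| := key1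
    _ < ∑ i ∈ Sᶜ, |w i| + ∑ i ∈ S, |z i| := by linarith
    _ = ∑ i ∈ S, |z i| + ∑ i ∈ Sᶜ, |z i| := by
        rw [Finset.sum_congr rfl key2]; ring
end

section
/- A matrix A satisfies the null space property of order s if and only if for every s-sparse vector x, x is the unique minimizer of ||z||_1 subject to Az = Ax. -/
/-- `A` satisfies the null space property of order `s` iff every `s`-sparse vector `x`
is the unique minimizer of `‖z‖₁` subject to `A z = A x`. -/
theorem nsp_iff_unique_l1_recovery {m N s : ℕ} (hs : s ≤ N)
    (A : Matrix (Fin m) (Fin N) ℝ) :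
    NSP s A ↔
      ∀ x : Fin N → ℝ, SparseVec s x →
        ∀ z : Fin N → ℝ, A.mulVec z = A.mulVec x → z ≠ x →
          ∑ i, |x i| < ∑ i, |z i| := by
  constructor
  · intro hA x hx z hz hne
    set w := x - z with hw
    have hker : A.mulVec w = 0 := by
      simp [hw, Matrix.mulVec_sub, hz]
    have hwne : w ≠ 0 := sub_ne_zero.mpr (Ne.symm hne)
    obtain ⟨S, hsub, hcard⟩ :=
      Finset.exists_superset_card_eq hx (by simpa using hs)
    have hNSP := hA w hker hwne S hcard
    have hx0 : ∀ i ∈ Sᶜ, x i = 0 := by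
      intro i hi
      by_contra h
      exact (Finset.mem_compl.mp hi)
        (hsub (Finset.mem_filter.mpr ⟨Finset.mem_univ i, h⟩))
    have h1 : ∑ i ∈ S, |x i| ≤ ∑ i ∈ S, |z i| + ∑ i ∈ S, |w i| := by
      rw [← Finset.sum_add_distrib]
      apply Finset.sum_le_sum
      intro i _
      have hxi : x i = z i + w i := by simp [hw]
      rw [hxi]; exact abs_add_le _ _
    have h2 : ∀ i ∈ Sᶜ, |w i| = |z i| := by
      intro i hi
      simp [hw, hx0 i hi]
    calc ∑ i, |x i| = ∑ i ∈ S, |x i| + ∑ i ∈ Sᶜ, |x i| :=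
          (Finset.sum_add_sum_compl S _).symm
      _ = ∑ i ∈ S, |x i| := by
          have e : ∑ i ∈ Sᶜ, |x i| = 0 :=
            Finset.sum_eq_zero fun i hi => by rw [hx0 i hi, abs_zero]
          rw [e, add_zero]
      _ ≤ ∑ i ∈ S, |z i| + ∑ i ∈ S, |w i| := h1
      _ < ∑ i ∈ S, |z i| + ∑ i ∈ Sᶜ, |w i| := by linarith
      _ = ∑ i ∈ S, |z i| + ∑ i ∈ Sᶜ, |z i| := by rw [Finset.sum_congr rfl h2]
      _ = ∑ i, |z i| := Finset.sum_add_sum_compl S _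
  · intro h w hker hwne S hcard
    set x : Fin N → ℝ := fun i => if i ∈ S then w i else 0 with hxdef
    set z : Fin N → ℝ := fun i => if i ∈ S then 0 else -w i with hzdef
    have hxz : x - z = w := by
      funext i
      by_cases hi : i ∈ S <;> simp [hxdef, hzdef, hi]
    have hsp : SparseVec s x := by
      unfold SparseVec
      rw [← hcard]
      apply Finset.card_le_card
      intro i hi
      rcases Finset.mem_filter.mp hi with ⟨_, hne0⟩
      by_contra h'
      exact hne0 (by simp [hxdef, h'])
    have hAz : A.mulVec z = A.mulVec x := by
      have h0 : A.mulVec x - A.mulVec z = 0 := by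
        rw [← Matrix.mulVec_sub, hxz, hker]
      exact (sub_eq_zero.mp h0).symm
    have hne : z ≠ x := by
      intro he
      apply hwne
      rw [← hxz, he, sub_self]
    have hlt := h x hsp z hAz hne
    have hxsum : ∑ i, |x i| = ∑ i ∈ S, |w i| := by
      rw [← Finset.sum_add_sum_compl S fun i => |x i|]
      have e1 : ∑ i ∈ S, |x i| = ∑ i ∈ S, |w i| :=
        Finset.sum_congr rfl fun i hi => by simp [hxdef, hi]
      have e2 : ∑ i ∈ Sᶜ, |x i| = 0 :=
        Finset.sum_eq_zero fun i hi => by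
          simp [hxdef, Finset.mem_compl.mp hi]
      rw [e1, e2, add_zero]
    have hzsum : ∑ i, |z i| = ∑ i ∈ Sᶜ, |w i| := by
      rw [← Finset.sum_add_sum_compl S fun i => |z i|]
      have e1 : ∑ i ∈ S, |z i| = 0 :=
        Finset.sum_eq_zero fun i hi => by simp [hzdef, hi]
      have e2 : ∑ i ∈ Sᶜ, |z i| = ∑ i ∈ Sᶜ, |w i| :=
        Finset.sum_congr rfl fun i hi => by
          simp [hzdef, Finset.mem_compl.mp hi]
      rw [e1, e2, zero_add]
    rw [← hxsum, ← hzsum]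
    exact hlt
end

section
/- Let X ∈ R^{N1×N2} be s-sparse and let U1 ∈ R^{m1×N1}, U2 ∈ R^{m2×N2} each satisfy NSP_s. If X = Σ_{i=1}^r z_i u_i^T is a rank decomposition of X (r = rank X), then Y = U1 X U2^T = Σ_{i=1}^r (U1 z_i)(U2 u_i)^T is a rank decomposition of Y, i.e. rank(Y) = rank(X). -/
/-!
If `Z` and `V` are the matrices with rows `z i` and `u i`, then `X = Zᵀ V`. Independent rows
make `V` surjective, so the column space of `X` is the span of the `z i` and its rank is `r`.
A vector in the column space of an `s`-sparse matrix is supported on at most `s` coordinates,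
and `NSP_s` keeps such vectors out of `ker U1`; hence `U1` is injective on the span of the `z i`
and the `U1 z i` stay independent. The same argument applied to `Xᵀ` handles the `U2 u i`, and
then `Y = ∑ (U1 z i)(U2 u i)ᵀ` has rank `r` by the first count.
-/

/-- A matrix is `s`-sparse if it has at most `s` nonzero entries in total. -/
def SparseMat {n1 n2 : ℕ} (s : ℕ) (X : Matrix (Fin n1) (Fin n2) ℝ) : Prop :=
  (Finset.univ.filter fun p : Fin n1 × Fin n2 => X p.1 p.2 ≠ 0).card ≤ s

namespace Matrix

variable {ι l k m n : Type*} [Fintype ι]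

theorem sum_vecMulVec_eq_transpose_mul {α : Type*} [NonUnitalNonAssocSemiring α]
    (a : ι → m → α) (b : ι → n → α) :
    ∑ i, vecMulVec (a i) (b i) = (of a)ᵀ * of b := by
  ext
  simp [mul_apply, vecMulVec_apply, sum_apply]

theorem mul_sum_vecMulVec_mul_transpose {α : Type*} [CommSemiring α] [Fintype m] [Fintype n]
    (A : Matrix l m α) (B : Matrix k n α) (a : ι → m → α) (b : ι → n → α) :
    A * (∑ i, vecMulVec (a i) (b i)) * Bᵀ = ∑ i, vecMulVec (A *ᵥ a i) (B *ᵥ b i) := by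
  simp only [Matrix.mul_sum, Matrix.sum_mul, mul_vecMulVec, vecMulVec_mul, vecMul_transpose]

variable {K : Type*} [Field K]

theorem mulVecLin_surjective_of_linearIndependent_rows [Fintype n] {B : Matrix ι n K}
    (hB : LinearIndependent K B.row) : Function.Surjective B.mulVecLin := by
  rw [← LinearMap.range_eq_top]
  apply Submodule.eq_top_of_finrank_eq
  rw [Module.finrank_fintype_fun_eq_card, ← finrank_span_eq_card hB, ← rank_eq_finrank_span_row]
  rfl

theorem range_mulVecLin_sum_vecMulVec [Fintype n] (a : ι → m → K) {b : ι → n → K}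
    (hb : LinearIndependent K b) :
    LinearMap.range (∑ i, vecMulVec (a i) (b i)).mulVecLin = Submodule.span K (Set.range a) := by
  rw [sum_vecMulVec_eq_transpose_mul, mulVecLin_mul,
    LinearMap.range_comp_of_range_eq_top _
      (LinearMap.range_eq_top.2 (mulVecLin_surjective_of_linearIndependent_rows (B := of b) hb)),
    range_mulVecLin, col_transpose]
  rfl

theorem rank_sum_vecMulVec [Fintype m] [Fintype n] {a : ι → m → K} {b : ι → n → K}
    (ha : LinearIndependent K a) (hb : LinearIndependent K b) :
    (∑ i, vecMulVec (a i) (b i)).rank = Fintype.card ι := by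
  rw [rank, range_mulVecLin_sum_vecMulVec a hb, finrank_span_eq_card ha]

end Matrix

open Matrix

theorem SparseMat.transpose {n1 n2 s : ℕ} {X : Matrix (Fin n1) (Fin n2) ℝ} (hX : SparseMat s X) :
    SparseMat s Xᵀ :=
  (Finset.card_equiv (Equiv.prodComm _ _) fun _ => by simp only [Finset.mem_filter, Finset.mem_univ, true_and]; rfl).trans_le hX

theorem SparseMat.exists_support_mulVec {N M s : ℕ} {X : Matrix (Fin N) (Fin M) ℝ}
    (hX : SparseMat s X) : ∃ T : Finset (Fin N), T.card ≤ s ∧ ∀ v, ∀ i ∉ T, (X *ᵥ v) i = 0 := by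
  refine ⟨(Finset.univ.filter fun p : Fin N × Fin M => X p.1 p.2 ≠ 0).image Prod.fst,
    Finset.card_image_le.trans hX, fun v i hi => ?_⟩
  have hrow : ∀ j, X i j = 0 := fun j => by
    by_contra hj
    exact hi (Finset.mem_image.2 ⟨(i, j), by simpa using hj, rfl⟩)
  simp [mulVec, dotProduct, hrow]

theorem NSP.eq_zero_of_mulVec_eq_zero {m n s : ℕ} {U : Matrix (Fin m) (Fin n) ℝ} (hU : NSP s U)
    (hs : s ≤ n) {T : Finset (Fin n)} (hT : T.card ≤ s) {w : Fin n → ℝ}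
    (hw : ∀ i ∉ T, w i = 0) (h0 : U *ᵥ w = 0) : w = 0 := by
  by_contra hne
  obtain ⟨S, hTS, hS⟩ := Finset.exists_superset_card_eq hT (by simpa using hs)
  have hout : ∑ i ∈ Sᶜ, |w i| = 0 :=
    Finset.sum_eq_zero fun i hi => by
      rw [hw i fun hiT => Finset.mem_compl.1 hi (hTS hiT), abs_zero]
  have hin : 0 ≤ ∑ i ∈ S, |w i| := Finset.sum_nonneg fun _ _ => abs_nonneg _
  linarith [hU w h0 hne S hS]

theorem NSP.disjoint_range_ker {N M m s : ℕ} {U : Matrix (Fin m) (Fin N) ℝ} (hU : NSP s U)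
    (hs : s ≤ N) {X : Matrix (Fin N) (Fin M) ℝ} (hX : SparseMat s X) :
    Disjoint (LinearMap.range X.mulVecLin) (LinearMap.ker U.mulVecLin) := by
  obtain ⟨T, hT, hsupp⟩ := hX.exists_support_mulVec
  rw [Submodule.disjoint_def]
  rintro _ ⟨v, rfl⟩ hker
  exact hU.eq_zero_of_mulVec_eq_zero hs hT (hsupp v) hker

theorem NSP.linearIndependent_mulVec {N M m s r : ℕ} {U : Matrix (Fin m) (Fin N) ℝ}
    (hU : NSP s U) (hs : s ≤ N) {z : Fin r → Fin N → ℝ} {u : Fin r → Fin M → ℝ}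
    (hX : SparseMat s (∑ i, vecMulVec (z i) (u i)))
    (hz : LinearIndependent ℝ z) (hu : LinearIndependent ℝ u) :
    LinearIndependent ℝ fun i => U *ᵥ z i :=
  hz.map (f := U.mulVecLin) (range_mulVecLin_sum_vecMulVec z hu ▸ hU.disjoint_range_ker hs hX)

theorem rank_decomposition_preserved_general {N1 N2 m1 m2 s r : ℕ}
    (hs1 : s ≤ N1) (hs2 : s ≤ N2)
    (X : Matrix (Fin N1) (Fin N2) ℝ) (hX : SparseMat s X)
    (U1 : Matrix (Fin m1) (Fin N1) ℝ) (U2 : Matrix (Fin m2) (Fin N2) ℝ)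
    (hU1 : NSP s U1) (hU2 : NSP s U2)
    (z : Fin r → Fin N1 → ℝ) (u : Fin r → Fin N2 → ℝ)
    (hz : LinearIndependent ℝ z) (hu : LinearIndependent ℝ u)
    (hdec : X = ∑ i, Matrix.vecMulVec (z i) (u i)) :
    U1 * X * U2.transpose =
      ∑ i, Matrix.vecMulVec (U1.mulVec (z i)) (U2.mulVec (u i)) ∧
    LinearIndependent ℝ (fun i => U1.mulVec (z i)) ∧
    LinearIndependent ℝ (fun i => U2.mulVec (u i)) ∧
    (U1 * X * U2.transpose).rank = X.rank := by
  subst hdec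
  have hXt : SparseMat s (∑ i, vecMulVec (u i) (z i)) := by
    simpa only [transpose_sum, transpose_vecMulVec] using hX.transpose
  have hUz := hU1.linearIndependent_mulVec hs1 hX hz hu
  have hUu := hU2.linearIndependent_mulVec hs2 hXt hu hz
  rw [mul_sum_vecMulVec_mul_transpose]
  exact ⟨rfl, hUz, hUu, by rw [rank_sum_vecMulVec hUz hUu, rank_sum_vecMulVec hz hu]⟩

/-- If `X` is `s`-sparse, `U1, U2` satisfy NSP of order `s`, and
`X = ∑ i, z i (u i)ᵀ` is a rank decomposition of `X` (`r = rank X`), then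
`Y = U1 X U2ᵀ = ∑ i, (U1 z i)(U2 u i)ᵀ` is a rank decomposition of `Y`;
in particular `rank Y = rank X`. -/
theorem rank_decomposition_preserved {N1 N2 m1 m2 s r : ℕ}
    (hs1 : s ≤ N1) (hs2 : s ≤ N2)
    (X : Matrix (Fin N1) (Fin N2) ℝ) (hX : SparseMat s X)
    (U1 : Matrix (Fin m1) (Fin N1) ℝ) (U2 : Matrix (Fin m2) (Fin N2) ℝ)
    (hU1 : NSP s U1) (hU2 : NSP s U2)
    (hr : r = X.rank)
    (z : Fin r → Fin N1 → ℝ) (u : Fin r → Fin N2 → ℝ)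
    (hz : LinearIndependent ℝ z) (hu : LinearIndependent ℝ u)
    (hdec : X = ∑ i, Matrix.vecMulVec (z i) (u i)) :
    U1 * X * U2.transpose =
      ∑ i, Matrix.vecMulVec (U1.mulVec (z i)) (U2.mulVec (u i)) ∧
    LinearIndependent ℝ (fun i => U1.mulVec (z i)) ∧
    LinearIndependent ℝ (fun i => U2.mulVec (u i)) ∧
    (U1 * X * U2.transpose).rank = X.rank :=
  rank_decomposition_preserved_general hs1 hs2 X hX U1 U2 hU1 hU2 z u hz hu hdec
end

section
/- Let X ∈ R^{N1×N2} be s-sparse, and suppose U1 ∈ R^{m1×N1} and U2 ∈ R^{m2×N2} satisfy NSP_s. Let Y = U1 X U2^T. Then X is uniquely determined by Y, U1, U2: if X' is also s-sparse with U1 X' U2^T = Y, then X' = X. -/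
/-- NSP of order `s` implies no nonzero `2s`-sparse vector lies in the kernel. -/
lemma nsp_ker_sparse_eq_zero {m n s : ℕ} (hs : s ≤ n)
    (A : Matrix (Fin m) (Fin n) ℝ) (hA : NSP s A) (w : Fin n → ℝ)
    (hw : A.mulVec w = 0)
    (hsupp : (Finset.univ.filter fun i => w i ≠ 0).card ≤ 2 * s) : w = 0 := by
  rcases Nat.eq_zero_or_pos s with hs0 | hspos
  · subst hs0
    simp only [Nat.mul_zero, Nat.le_zero, Finset.card_eq_zero] at hsupp
    funext i
    simp only [Pi.zero_apply]
    by_contra hi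
    have : i ∈ Finset.univ.filter fun i => w i ≠ 0 := by
      simp [hi]
    rw [hsupp] at this
    exact absurd this (Finset.notMem_empty i)
  · by_contra hne
    -- choose S of size s maximizing ∑_{i∈S} |w i|
    have hpow : (Finset.powersetCard s (Finset.univ : Finset (Fin n))).Nonempty := by
      rw [Finset.powersetCard_nonempty]
      simpa using hs
    obtain ⟨S, hSmem, hSmax⟩ :=
      Finset.exists_max_image _ (fun S => ∑ i ∈ S, |w i|) hpow
    have hScard : S.card = s := (Finset.mem_powersetCard.mp hSmem).2
    -- exchange argument
    have key : ∀ a ∉ S, ∀ b ∈ S, |w a| ≤ |w b| := by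
      intro a ha b hb
      have hane : a ∉ S.erase b := fun h => ha (Finset.mem_of_mem_erase h)
      have hmem' : insert a (S.erase b) ∈
          Finset.powersetCard s (Finset.univ : Finset (Fin n)) := by
        rw [Finset.mem_powersetCard]
        refine ⟨Finset.subset_univ _, ?_⟩
        rw [Finset.card_insert_of_notMem hane, Finset.card_erase_of_mem hb, hScard]
        omega
      have hle := hSmax _ hmem'
      rw [Finset.sum_insert hane] at hle
      have herase : |w b| + ∑ i ∈ S.erase b, |w i| = ∑ i ∈ S, |w i| :=
        Finset.add_sum_erase S (fun i => |w i|) hb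
      linarith
    have hSne : S.Nonempty := Finset.card_pos.mp (hScard ▸ hspos)
    obtain ⟨b0, hb0S, hb0min⟩ := Finset.exists_min_image S (fun b => |w b|) hSne
    -- bound: ∑_{Sᶜ} |w| ≤ ∑_S |w|
    have hbound : ∑ i ∈ Sᶜ, |w i| ≤ ∑ i ∈ S, |w i| := by
      rcases eq_or_ne (w b0) 0 with h0 | h0
      · have hz : ∑ i ∈ Sᶜ, |w i| = 0 := by
          apply Finset.sum_eq_zero
          intro a ha
          have := key a (Finset.mem_compl.mp ha) b0 hb0S
          rw [h0, abs_zero] at this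
          exact le_antisymm this (abs_nonneg _)
        rw [hz]
        exact Finset.sum_nonneg fun i _ => abs_nonneg _
      · set T := Finset.univ.filter fun i => w i ≠ 0 with hT
        have hST : S ⊆ T := by
          intro b hb
          simp only [hT, Finset.mem_filter, Finset.mem_univ, true_and]
          intro hb0
          have h1 := hb0min b hb
          rw [hb0] at h1
          simp only [abs_zero] at h1
          exact h0 (abs_eq_zero.mp (le_antisymm h1 (abs_nonneg _)))
        have hsub : (Sᶜ.filter fun i => w i ≠ 0) ⊆ T \ S := by
          intro i hi
          simp only [Finset.mem_filter, Finset.mem_compl] at hi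
          simp [hT, Finset.mem_sdiff, hi.1, hi.2]
        have hcard : (Sᶜ.filter fun i => w i ≠ 0).card ≤ s := by
          have h1 := Finset.card_le_card hsub
          rw [Finset.card_sdiff_of_subset hST] at h1
          have h2 : T.card ≤ 2 * s := hsupp
          omega
        have heq : ∑ i ∈ Sᶜ, |w i| = ∑ i ∈ Sᶜ.filter fun i => w i ≠ 0, |w i| := by
          symm
          apply Finset.sum_filter_of_ne
          intro i _ h
          exact fun hh => h (by rw [hh, abs_zero])
        have h1 : ∑ i ∈ Sᶜ.filter fun i => w i ≠ 0, |w i| ≤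
            (Sᶜ.filter fun i => w i ≠ 0).card • |w b0| := by
          apply Finset.sum_le_card_nsmul
          intro i hi
          exact key i (Finset.mem_compl.mp (Finset.mem_filter.mp hi).1) b0 hb0S
        have h2 : (Sᶜ.filter fun i => w i ≠ 0).card • |w b0| ≤ s • |w b0| :=
          nsmul_le_nsmul_left (abs_nonneg _) hcard
        have h3 : S.card • |w b0| ≤ ∑ i ∈ S, |w i| :=
          Finset.card_nsmul_le_sum S _ _ fun b hb => hb0min b hb
        rw [hScard] at h3
        rw [heq]
        exact h1.trans (h2.trans h3)
    have := hA w hw hne S hScard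
    linarith

/-- If `X` is `s`-sparse and `U1, U2` satisfy NSP of order `s`, then `X` is uniquely
determined by `Y = U1 X U2ᵀ`: any `s`-sparse `X'` with `U1 X' U2ᵀ = Y` equals `X`. -/
theorem sparse_matrix_unique_from_measurements {N1 N2 m1 m2 s : ℕ}
    (hs1 : s ≤ N1) (hs2 : s ≤ N2)
    (X X' : Matrix (Fin N1) (Fin N2) ℝ)
    (hX : SparseMat s X) (hX' : SparseMat s X')
    (U1 : Matrix (Fin m1) (Fin N1) ℝ) (U2 : Matrix (Fin m2) (Fin N2) ℝ)
    (hU1 : NSP s U1) (hU2 : NSP s U2)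
    (hmeas : U1 * X' * U2.transpose = U1 * X * U2.transpose) :
    X' = X := by
  set D := X' - X with hDdef
  have hD : U1 * D * U2.transpose = 0 := by
    rw [hDdef, Matrix.mul_sub, Matrix.sub_mul, hmeas, sub_self]
  set suppD := Finset.univ.filter fun p : Fin N1 × Fin N2 => D p.1 p.2 ≠ 0 with hsuppD
  have hDsupp : suppD.card ≤ 2 * s := by
    have hsub : suppD ⊆ (Finset.univ.filter fun p : Fin N1 × Fin N2 => X' p.1 p.2 ≠ 0) ∪
        (Finset.univ.filter fun p : Fin N1 × Fin N2 => X p.1 p.2 ≠ 0) := by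
      intro p hp
      simp only [hsuppD, Finset.mem_filter, Finset.mem_univ, true_and, hDdef,
        Matrix.sub_apply] at hp
      simp only [Finset.mem_union, Finset.mem_filter, Finset.mem_univ, true_and]
      by_contra h
      push_neg at h
      rw [h.1, h.2, sub_self] at hp
      exact hp rfl
    calc suppD.card ≤ _ := Finset.card_le_card hsub
      _ ≤ _ + _ := Finset.card_union_le _ _
      _ ≤ 2 * s := by have := hX; have := hX'; unfold SparseMat at *; omega
  -- Step 1: every row of U1 * D is a 2s-sparse kernel vector of U2, hence U1 * D = 0
  have hU1D : U1 * D = 0 := by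
    ext i j
    have hrow : (fun j => (U1 * D) i j) = 0 := by
      apply nsp_ker_sparse_eq_zero hs2 U2 hU2
      · funext l
        have := congrFun (congrFun hD i) l
        simp only [Matrix.mul_apply, Matrix.transpose_apply, Matrix.zero_apply] at this
        simp only [Matrix.mulVec, dotProduct, Pi.zero_apply]
        rw [← this]
        exact Finset.sum_congr rfl fun k _ => mul_comm _ _
      · have himg : (Finset.univ.filter fun j' => (U1 * D) i j' ≠ 0) ⊆
            suppD.image Prod.snd := by
          intro j' hj'
          simp only [Finset.mem_filter, Finset.mem_univ, true_and] at hj'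
          have hex : ∃ k, D k j' ≠ 0 := by
            by_contra hall
            push_neg at hall
            apply hj'
            simp only [Matrix.mul_apply]
            exact Finset.sum_eq_zero fun k _ => by rw [hall k, mul_zero]
          obtain ⟨k, hk⟩ := hex
          apply Finset.mem_image.mpr
          exact ⟨(k, j'), by simp [hsuppD, hk], rfl⟩
        exact le_trans (Finset.card_le_card himg) (le_trans Finset.card_image_le hDsupp)
    have := congrFun hrow j
    simpa using this
  -- Step 2: every column of D is a 2s-sparse kernel vector of U1, hence D = 0
  have hDzero : D = 0 := by
    ext k j
    have hcol : (fun k => D k j) = 0 := by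
      apply nsp_ker_sparse_eq_zero hs1 U1 hU1
      · funext i
        have := congrFun (congrFun hU1D i) j
        simp only [Matrix.mul_apply, Matrix.zero_apply] at this
        simpa [Matrix.mulVec, dotProduct] using this
      · have himg : (Finset.univ.filter fun k' => D k' j ≠ 0) ⊆
            suppD.image Prod.fst := by
          intro k' hk'
          simp only [Finset.mem_filter, Finset.mem_univ, true_and] at hk'
          apply Finset.mem_image.mpr
          exact ⟨(k', j), by simp [hsuppD, hk'], rfl⟩
        exact le_trans (Finset.card_le_card himg) (le_trans Finset.card_image_le hDsupp)
    have := congrFun hcol k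
    simpa using this
  have : X' - X = 0 := hDzero
  exact sub_eq_zero.mp this
end

section
/- Let V1 ⊆ R^{N1} and V2 ⊆ R^{N2} be subspaces such that every nonzero vector of V1 and of V2 is s-sparse, and let U1, U2 satisfy NSP_s. If X, Z ∈ R^{N1×N2} have column spaces contained in V1 and row spaces contained in V2, and U1 X U2^T = U1 Z U2^T, then X = Z. -/
/-!
Put `M = X - Z`, so that `U1 M U2ᵀ = 0`. Both `U1` and `U2` are injective on `V1` and `V2`,
because their kernels contain no nonzero `s`-sparse vector. The columns of `M U2ᵀ` are
combinations of columns of `M`, hence lie in `V1` and are killed by `U1`; so `M U2ᵀ = 0`.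
Then every row of `M` lies in `V2` and is killed by `U2`, so `M = 0`.
-/

open Matrix

/-- If `w` vanished off a set `S` of size `s`, the null space property would give
`∑_S |w i| < 0`. -/
theorem NSP.eq_zero_of_sparseVec {m n s : ℕ} {A : Matrix (Fin m) (Fin n) ℝ} (hA : NSP s A)
    (hs : s ≤ n) {w : Fin n → ℝ} (hw : SparseVec s w) (hAw : A *ᵥ w = 0) : w = 0 := by
  by_contra hne
  obtain ⟨S, hsupp, hcard⟩ := Finset.exists_superset_card_eq hw (by simpa using hs)
  have hoff : ∑ i ∈ Sᶜ, |w i| = 0 :=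
    Finset.sum_eq_zero fun i hi => by
      by_contra hwi
      exact Finset.mem_compl.mp hi (hsupp (by simpa using hwi))
  have hon : 0 ≤ ∑ i ∈ S, |w i| := Finset.sum_nonneg fun i _ => abs_nonneg _
  linarith [hA w hAw hne S hcard]

theorem NSP.eq_zero_of_mem {m n s : ℕ} {A : Matrix (Fin m) (Fin n) ℝ} (hA : NSP s A)
    (hs : s ≤ n) {V : Submodule ℝ (Fin n → ℝ)} (hV : ∀ v ∈ V, v ≠ 0 → SparseVec s v)
    {v : Fin n → ℝ} (hv : v ∈ V) (hAv : A *ᵥ v = 0) : v = 0 := by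
  by_contra hne
  exact hne (hA.eq_zero_of_sparseVec hs (hV v hv hne) hAv)

namespace Matrix

variable {R l m n : Type*} [CommSemiring R] [Fintype m]

theorem col_mul_mem {V : Submodule R (l → R)} {M : Matrix l m R} (hM : ∀ j, M.col j ∈ V)
    (B : Matrix m n R) (k : n) : (M * B).col k ∈ V := by
  have hrange : (M * B).col k ∈ LinearMap.range M.mulVecLin := ⟨B.col k, rfl⟩
  rw [range_mulVecLin] at hrange
  exact Submodule.span_le.mpr (Set.range_subset_iff.mpr hM) hrange

theorem eq_zero_of_mul_eq_zero_of_col_mem {V : Submodule R (m → R)} {A : Matrix l m R}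
    (hA : ∀ v ∈ V, A *ᵥ v = 0 → v = 0) {M : Matrix m n R} (hM : ∀ j, M.col j ∈ V)
    (hAM : A * M = 0) : M = 0 := by
  suffices hcol : M.col = 0 from transpose_eq_zero.mp hcol
  funext j
  exact hA _ (hM j) (congrFun (congrArg col hAM) j)

end Matrix

/-- Let `V1 ⊆ ℝ^{N1}` and `V2 ⊆ ℝ^{N2}` be subspaces all of whose nonzero vectors are
`s`-sparse, and let `U1, U2` satisfy NSP of order `s`. If the column spaces of `X, Z`
are contained in `V1`, their row spaces in `V2`, and `U1 X U2ᵀ = U1 Z U2ᵀ`, then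
`X = Z`. -/
theorem injectivity_on_sparse_factor_spaces {N1 N2 m1 m2 s : ℕ}
    (hs1 : s ≤ N1) (hs2 : s ≤ N2)
    (V1 : Submodule ℝ (Fin N1 → ℝ)) (V2 : Submodule ℝ (Fin N2 → ℝ))
    (hV1 : ∀ v ∈ V1, v ≠ 0 → SparseVec s v)
    (hV2 : ∀ v ∈ V2, v ≠ 0 → SparseVec s v)
    (U1 : Matrix (Fin m1) (Fin N1) ℝ) (U2 : Matrix (Fin m2) (Fin N2) ℝ)
    (hU1 : NSP s U1) (hU2 : NSP s U2)
    (X Z : Matrix (Fin N1) (Fin N2) ℝ)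
    (hXcol : ∀ j, (fun i => X i j) ∈ V1) (hXrow : ∀ i, (fun j => X i j) ∈ V2)
    (hZcol : ∀ j, (fun i => Z i j) ∈ V1) (hZrow : ∀ i, (fun j => Z i j) ∈ V2)
    (hmeas : U1 * X * U2.transpose = U1 * Z * U2.transpose) :
    X = Z := by
  set M := X - Z
  have hMcol : ∀ j, M.col j ∈ V1 := fun j => V1.sub_mem (hXcol j) (hZcol j)
  have hMrow : ∀ i, Mᵀ.col i ∈ V2 := fun i => V2.sub_mem (hXrow i) (hZrow i)
  have hMU2 : M * U2ᵀ = 0 := by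
    refine eq_zero_of_mul_eq_zero_of_col_mem (fun v hv => hU1.eq_zero_of_mem hs1 hV1 hv)
      (col_mul_mem hMcol _) ?_
    rw [← Matrix.mul_assoc, Matrix.mul_sub, Matrix.sub_mul, hmeas, sub_self]
  have hMt : Mᵀ = 0 :=
    eq_zero_of_mul_eq_zero_of_col_mem (fun v hv => hU2.eq_zero_of_mem hs2 hV2 hv) hMrow
      (by rw [← transpose_transpose U2, ← transpose_mul, hMU2, transpose_zero])
  exact sub_eq_zero.mp (transpose_eq_zero.mp hMt)
end

section
/- Let X ∈ R^{N1×N2} be s-sparse with U1, U2 satisfying NSP_s, and Y = U1 X U2^T. Given any rank decomposition Y = Σ_{i=1}^K b_i^{(1)} (b_i^{(2)})^T with K = rank(Y), define w_i^{(j)} as the unique s-sparse solution of U_j w_i^{(j)} = b_i^{(j)}. Then X = Σ_{i=1}^K w_i^{(1)} (w_i^{(2)})^T. -/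
/-- Pad a small finset to one of exact cardinality `s`. -/
lemma exists_pad {n s : ℕ} (hs : s ≤ n) (T : Finset (Fin n)) (hT : T.card ≤ s) :
    ∃ S : Finset (Fin n), T ⊆ S ∧ S.card = s := by
  obtain ⟨S, hTS, _, hcard⟩ := Finset.exists_subsuperset_card_eq (T.subset_univ) hT
    (by simpa using hs)
  exact ⟨S, hTS, hcard⟩

/-- A sparse vector in the kernel of an NSP matrix is zero. -/
lemma nsp_sparse_kernel {m n s : ℕ} {A : Matrix (Fin m) (Fin n) ℝ} (hA : NSP s A)
    (hs : s ≤ n) {w : Fin n → ℝ} (hws : SparseVec s w) (h0 : A.mulVec w = 0) : w = 0 := by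
  by_contra hne
  obtain ⟨S, hTS, hcard⟩ := exists_pad hs _ hws
  have hlt := hA w h0 hne S hcard
  have h1 : ∑ i ∈ Sᶜ, |w i| = 0 := by
    apply Finset.sum_eq_zero
    intro i hi
    have : i ∉ S := by simpa [Finset.mem_compl] using hi
    have : w i = 0 := by
      by_contra hwi
      exact this (hTS (by simp [hwi]))
    simp [this]
  have h2 : (0:ℝ) ≤ ∑ i ∈ S, |w i| := Finset.sum_nonneg fun i _ => abs_nonneg _
  rw [h1] at hlt; linarith

/-- Strict ℓ¹-minimality of sparse solutions under NSP. -/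
lemma nsp_l1_lt {m n s : ℕ} {A : Matrix (Fin m) (Fin n) ℝ} (hA : NSP s A) (hs : s ≤ n)
    {x y : Fin n → ℝ} (hxs : SparseVec s x) (hAxy : A.mulVec x = A.mulVec y)
    (hne : x ≠ y) : ∑ i, |x i| < ∑ i, |y i| := by
  obtain ⟨S, hTS, hcard⟩ := exists_pad hs _ hxs
  have hx0 : ∀ i ∉ S, x i = 0 := by
    intro i hi
    by_contra hxi
    exact hi (hTS (by simp [hxi]))
  set w : Fin n → ℝ := x - y with hw
  have hw0 : A.mulVec w = 0 := by
    rw [hw, Matrix.mulVec_sub, hAxy, sub_self]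
  have hwne : w ≠ 0 := sub_ne_zero.mpr hne
  have hlt := hA w hw0 hwne S hcard
  have hcompl : ∀ i ∈ Sᶜ, |w i| = |y i| := by
    intro i hi
    have : i ∉ S := by simpa [Finset.mem_compl] using hi
    simp [hw, hx0 i this]
  have hS : ∀ i ∈ S, |x i| - |y i| ≤ |w i| := by
    intro i _
    have := abs_sub_abs_le_abs_sub (x i) (y i)
    simpa [hw] using this
  have h1 : ∑ i ∈ S, (|x i| - |y i|) ≤ ∑ i ∈ S, |w i| := Finset.sum_le_sum hS
  have h2 : ∑ i ∈ Sᶜ, |w i| = ∑ i ∈ Sᶜ, |y i| := Finset.sum_congr rfl hcompl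
  have hxsum : ∑ i, |x i| = ∑ i ∈ S, |x i| := by
    rw [← Finset.sum_add_sum_compl S]
    have : ∑ i ∈ Sᶜ, |x i| = 0 := Finset.sum_eq_zero fun i hi => by
      have : i ∉ S := by simpa [Finset.mem_compl] using hi
      simp [hx0 i this]
    rw [this, add_zero]
  have hysum : ∑ i, |y i| = ∑ i ∈ S, |y i| + ∑ i ∈ Sᶜ, |y i| :=
    (Finset.sum_add_sum_compl S _).symm
  rw [Finset.sum_sub_distrib] at h1
  rw [hxsum, hysum]
  linarith
/-- Uniqueness of `s`-sparse solutions under NSP. -/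
lemma nsp_unique {m n s : ℕ} {A : Matrix (Fin m) (Fin n) ℝ} (hA : NSP s A) (hs : s ≤ n)
    {x y : Fin n → ℝ} (hxs : SparseVec s x) (hys : SparseVec s y)
    (hAxy : A.mulVec x = A.mulVec y) : x = y := by
  by_contra hne
  have h1 := nsp_l1_lt hA hs hxs hAxy hne
  have h2 := nsp_l1_lt hA hs hys hAxy.symm (Ne.symm hne)
  linarith

/-- Dual family for a linearly independent family in `ℝ^m`. -/
lemma exists_dual {K m : ℕ} {b : Fin K → Fin m → ℝ} (hb : LinearIndependent ℝ b)
    (i₀ : Fin K) : ∃ c : Fin m → ℝ, ∀ i, dotProduct (b i) c = if i = i₀ then 1 else 0 := by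
  classical
  set B : Matrix (Fin K) (Fin m) ℝ := Matrix.of b with hB
  set G : Matrix (Fin K) (Fin K) ℝ := B * B.transpose with hG
  have hinj : Function.Injective G.mulVec := by
    have hker : ∀ v, G.mulVec v = 0 → v = 0 := by
      intro v hv
      have h1 : dotProduct (B.transpose.mulVec v) (B.transpose.mulVec v) = 0 := by
        have h0 : dotProduct v (G.mulVec v) = 0 := by rw [hv]; simp
        rw [hG, ← Matrix.mulVec_mulVec, Matrix.dotProduct_mulVec] at h0
        rw [Matrix.mulVec_transpose] at h0
        rw [Matrix.mulVec_transpose]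
        exact h0
      have h2 : B.transpose.mulVec v = 0 := dotProduct_self_eq_zero.mp h1
      have h3 : ∑ i, v i • b i = 0 := by
        funext t
        have ht := congr_fun h2 t
        simp only [Matrix.mulVec, dotProduct, Matrix.transpose_apply, hB,
          Matrix.of_apply, Pi.zero_apply] at ht
        simp only [Finset.sum_apply, Pi.smul_apply, smul_eq_mul, Pi.zero_apply]
        rw [← ht]
        exact Finset.sum_congr rfl fun i _ => by ring
      exact funext (Fintype.linearIndependent_iff.mp hb _ h3)
    intro u v huv
    have : G.mulVec (u - v) = 0 := by rw [Matrix.mulVec_sub, huv, sub_self]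
    have := hker _ this
    exact sub_eq_zero.mp this
  have hunit : IsUnit G := Matrix.mulVec_injective_iff_isUnit.mp hinj
  have hdet : IsUnit G.det := (Matrix.isUnit_iff_isUnit_det G).mp hunit
  refine ⟨B.transpose.mulVec (G⁻¹.mulVec (Pi.single i₀ 1)), ?_⟩
  intro i
  have hBc : B.mulVec (B.transpose.mulVec (G⁻¹.mulVec (Pi.single i₀ 1))) = Pi.single i₀ 1 := by
    rw [Matrix.mulVec_mulVec, Matrix.mulVec_mulVec, ← hG, Matrix.mul_nonsing_inv G hdet,
      Matrix.one_mulVec]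
  have hI := congr_fun hBc i
  rw [Pi.single_apply] at hI
  simpa [Matrix.mulVec, hB] using hI

/-- Sparsity from a small support set. -/
lemma sparse_of_supp {n s : ℕ} {x : Fin n → ℝ} {R : Finset (Fin n)} (hR : R.card ≤ s)
    (h : ∀ a ∉ R, x a = 0) : SparseVec s x := by
  refine le_trans (Finset.card_le_card ?_) hR
  intro a ha
  simp only [Finset.mem_filter] at ha
  by_contra haR
  exact ha.2 (h a haR)

/-- Key support lemma: each `w1 i` is supported on the row support `R` of `X`. -/
lemma supp_lemma {N1 N2 m1 m2 s K : ℕ} (hs1 : s ≤ N1)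
    (X : Matrix (Fin N1) (Fin N2) ℝ)
    (U1 : Matrix (Fin m1) (Fin N1) ℝ) (U2 : Matrix (Fin m2) (Fin N2) ℝ)
    (hU1 : NSP s U1)
    (R : Finset (Fin N1)) (hR : R.card ≤ s) (hrow : ∀ a ∉ R, ∀ b, X a b = 0)
    (b1 : Fin K → Fin m1 → ℝ) (b2 : Fin K → Fin m2 → ℝ)
    (hb2 : LinearIndependent ℝ b2)
    (hYdec : U1 * X * U2.transpose = ∑ i, Matrix.vecMulVec (b1 i) (b2 i))
    (w1 : Fin K → Fin N1 → ℝ) (hw1s : ∀ i, SparseVec s (w1 i))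
    (hw1 : ∀ i, U1.mulVec (w1 i) = b1 i) :
    ∀ i, ∀ a ∉ R, w1 i a = 0 := by
  intro i
  obtain ⟨c, hc⟩ := exists_dual hb2 i
  set v : Fin N1 → ℝ := X.mulVec (U2.transpose.mulVec c) with hv
  have hvsupp : ∀ a ∉ R, v a = 0 := by
    intro a ha
    simp only [hv, Matrix.mulVec, dotProduct]
    exact Finset.sum_eq_zero fun b _ => by rw [hrow a ha b, zero_mul]
  have hvs : SparseVec s v := sparse_of_supp hR hvsupp
  have hU1v : U1.mulVec v = b1 i := by
    have h1 : U1.mulVec v = (U1 * X * U2.transpose).mulVec c := by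
      rw [hv, Matrix.mulVec_mulVec, Matrix.mulVec_mulVec]
    rw [h1, hYdec]
    funext p
    have hsum : (∑ j, Matrix.vecMulVec (b1 j) (b2 j)).mulVec c p
        = ∑ j, (Matrix.vecMulVec (b1 j) (b2 j)).mulVec c p := by
      simp only [Matrix.mulVec, dotProduct, Matrix.sum_apply, Finset.sum_mul]
      exact Finset.sum_comm
    rw [hsum]
    have hterm : ∀ j, (Matrix.vecMulVec (b1 j) (b2 j)).mulVec c p
        = (if j = i then (1:ℝ) else 0) * b1 j p := by
      intro j
      have : (Matrix.vecMulVec (b1 j) (b2 j)).mulVec c p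
          = b1 j p * dotProduct (b2 j) c := by
        simp only [Matrix.mulVec, dotProduct, Matrix.vecMulVec_apply, Finset.mul_sum]
        exact Finset.sum_congr rfl fun q _ => by ring
      rw [this, hc j, mul_comm]
    rw [Finset.sum_congr rfl fun j _ => hterm j]
    simp
  have := nsp_unique hU1 hs1 hvs (hw1s i) (by rw [hU1v, hw1 i])
  intro a ha
  rw [← this] at *
  exact hvsupp a ha

/-- GTCS-P for matrices: given a rank decomposition
`Y = U1 X U2ᵀ = ∑ i, b1 i (b2 i)ᵀ` with `K = rank Y`, and `s`-sparse solutions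
`w1 i, w2 i` of `U1 (w1 i) = b1 i`, `U2 (w2 i) = b2 i`, one has
`X = ∑ i, w1 i (w2 i)ᵀ`. -/
theorem gtcs_p_matrix_recovery {N1 N2 m1 m2 s K : ℕ}
    (hs1 : s ≤ N1) (hs2 : s ≤ N2)
    (X : Matrix (Fin N1) (Fin N2) ℝ) (hX : SparseMat s X)
    (U1 : Matrix (Fin m1) (Fin N1) ℝ) (U2 : Matrix (Fin m2) (Fin N2) ℝ)
    (hU1 : NSP s U1) (hU2 : NSP s U2)
    (hK : K = (U1 * X * U2.transpose).rank)
    (b1 : Fin K → Fin m1 → ℝ) (b2 : Fin K → Fin m2 → ℝ)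
    (hb1 : LinearIndependent ℝ b1) (hb2 : LinearIndependent ℝ b2)
    (hYdec : U1 * X * U2.transpose = ∑ i, Matrix.vecMulVec (b1 i) (b2 i))
    (w1 : Fin K → Fin N1 → ℝ) (w2 : Fin K → Fin N2 → ℝ)
    (hw1s : ∀ i, SparseVec s (w1 i)) (hw2s : ∀ i, SparseVec s (w2 i))
    (hw1 : ∀ i, U1.mulVec (w1 i) = b1 i) (hw2 : ∀ i, U2.mulVec (w2 i) = b2 i) :
    X = ∑ i, Matrix.vecMulVec (w1 i) (w2 i) := by
  classical
  set P : Finset (Fin N1 × Fin N2) :=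
    Finset.univ.filter fun p : Fin N1 × Fin N2 => X p.1 p.2 ≠ 0 with hP
  set R : Finset (Fin N1) := P.image Prod.fst with hRdef
  set C : Finset (Fin N2) := P.image Prod.snd with hCdef
  have hRcard : R.card ≤ s := le_trans Finset.card_image_le hX
  have hCcard : C.card ≤ s := le_trans Finset.card_image_le hX
  have hrow : ∀ a ∉ R, ∀ b, X a b = 0 := by
    intro a ha b
    by_contra hab
    exact ha (Finset.mem_image.mpr ⟨(a, b), by simp [hP, hab], rfl⟩)
  have hcol : ∀ b ∉ C, ∀ a, X a b = 0 := by
    intro b hb a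
    by_contra hab
    exact hb (Finset.mem_image.mpr ⟨(a, b), by simp [hP, hab], rfl⟩)
  -- supports of w1, w2
  have hw1supp : ∀ i, ∀ a ∉ R, w1 i a = 0 :=
    supp_lemma hs1 X U1 U2 hU1 R hRcard hrow b1 b2 hb2 hYdec w1 hw1s hw1
  have hYdecT : U2 * X.transpose * U1.transpose = ∑ i, Matrix.vecMulVec (b2 i) (b1 i) := by
    have := congr_arg Matrix.transpose hYdec
    rw [Matrix.transpose_mul, Matrix.transpose_mul, Matrix.transpose_transpose,
      Matrix.transpose_sum] at this
    rw [← Matrix.mul_assoc] at this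
    rw [this]
    exact Finset.sum_congr rfl fun i _ => by
      ext p q; simp [Matrix.vecMulVec_apply, Matrix.transpose_apply, mul_comm]
  have hw2supp : ∀ i, ∀ b ∉ C, w2 i b = 0 :=
    supp_lemma hs2 X.transpose U2 U1 hU2 C hCcard
      (fun b hb a => hcol b hb a) b2 b1 hb1 hYdecT w2 hw2s hw2
  -- the residual
  set Z : Matrix (Fin N1) (Fin N2) ℝ := X - ∑ i, Matrix.vecMulVec (w1 i) (w2 i) with hZ
  have hZrow : ∀ a ∉ R, ∀ b, Z a b = 0 := by
    intro a ha b
    simp only [hZ, Matrix.sub_apply, Matrix.sum_apply, Matrix.vecMulVec_apply]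
    rw [hrow a ha b, Finset.sum_eq_zero fun i _ => by rw [hw1supp i a ha, zero_mul], sub_zero]
  have hZcol : ∀ b ∉ C, ∀ a, Z a b = 0 := by
    intro b hb a
    simp only [hZ, Matrix.sub_apply, Matrix.sum_apply, Matrix.vecMulVec_apply]
    rw [hcol b hb a, Finset.sum_eq_zero fun i _ => by rw [hw2supp i b hb, mul_zero], sub_zero]
  have hUZU : U1 * Z * U2.transpose = 0 := by
    have hone : ∀ i, U1 * Matrix.vecMulVec (w1 i) (w2 i) * U2.transpose
        = Matrix.vecMulVec (b1 i) (b2 i) := by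
      intro i
      rw [← hw1 i, ← hw2 i]
      ext p q
      trans ∑ a, ∑ b, U1 p a * w1 i a * (U2 q b * w2 i b)
      · simp only [Matrix.mul_apply, Matrix.vecMulVec_apply, Matrix.transpose_apply,
          Finset.sum_mul]
        conv_lhs => rw [Finset.sum_comm]
        exact Finset.sum_congr rfl fun a _ => Finset.sum_congr rfl fun b _ => by ring
      · simp only [Matrix.vecMulVec_apply, Matrix.mulVec, dotProduct,
          Finset.sum_mul_sum]
    rw [hZ, Matrix.mul_sub, Matrix.sub_mul, Matrix.mul_sum, Matrix.sum_mul]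
    rw [Finset.sum_congr rfl fun i _ => hone i, hYdec, sub_self]
  -- columns of Z * U2ᵀ vanish
  have hcols : ∀ j : Fin m2, ∀ a : Fin N1, ∑ b, Z a b * U2 j b = 0 := by
    intro j
    set v : Fin N1 → ℝ := fun a => ∑ b, Z a b * U2 j b with hv
    have hvsupp : ∀ a ∉ R, v a = 0 := fun a ha =>
      Finset.sum_eq_zero fun b _ => by rw [hZrow a ha b, zero_mul]
    have hvs : SparseVec s v := sparse_of_supp hRcard hvsupp
    have hU1v : U1.mulVec v = 0 := by
      funext p
      have hcol : U1.mulVec v p = (U1 * Z * U2.transpose) p j := by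
        trans ∑ a, ∑ b, U1 p a * (Z a b * U2 j b)
        · simp only [hv, Matrix.mulVec, dotProduct, Finset.mul_sum]
        · simp only [Matrix.mul_apply, Matrix.transpose_apply, Finset.sum_mul]
          conv_lhs => rw [Finset.sum_comm]
          exact Finset.sum_congr rfl fun b _ => Finset.sum_congr rfl fun a _ => by ring
      rw [Pi.zero_apply, hcol, hUZU]
      simp
    have := nsp_sparse_kernel hU1 hs1 hvs hU1v
    intro a
    exact congr_fun this a
  have hZ0 : Z = 0 := by
    ext a b
    have hrowZ : U2.mulVec (Z a) = 0 := by
      funext j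
      simp only [Matrix.mulVec, dotProduct, Pi.zero_apply]
      rw [← hcols j a]
      exact Finset.sum_congr rfl fun b' _ => by ring
    have hZas : SparseVec s (Z a) := sparse_of_supp hCcard (fun b' hb' => hZcol b' hb' a)
    have := nsp_sparse_kernel hU2 hs2 hZas hrowZ
    simpa using congr_fun this b
  have := sub_eq_zero.mp hZ0
  exact this
end

section
/- Serial matrix recovery (GTCS-S): Let X ∈ R^{N1×N2} be s-sparse, U1, U2 satisfy NSP_s, and Y = U1 X U2^T. Each column of Z := X U2^T is s-sparse and is the unique ℓ1-minimizer consistent with the corresponding column of Y under U1; subsequently each row of X is s-sparse and is the unique ℓ1-minimizer consistent with the corresponding row of Z under U2. Hence X is recovered exactly. -/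
/-! The null space property of order `s` makes ℓ1-minimisation recover every `s`-sparse `x`
from `U x` uniquely: for `z ≠ x` with `U z = U x`, the difference `w = x - z` is a nonzero
kernel vector, and for a set `S` of size `s` containing the support of `x`,
`‖x‖₁ ≤ ‖z_S‖₁ + ‖w_S‖₁ < ‖z_S‖₁ + ‖w_{Sᶜ}‖₁ = ‖z‖₁`.
Both stages are instances of this: the columns of `X U₂ᵀ` and the rows of `X` are `s`-sparse
because `X` is, and they are measured by `U₁ (X U₂ᵀ)` and `X U₂ᵀ` respectively. -/

open Matrix

theorem SparseVec.exists_card_eq_of_le {n s : ℕ} {x : Fin n → ℝ} (hx : SparseVec s x)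
    (hs : s ≤ n) : ∃ S : Finset (Fin n), S.card = s ∧ ∀ i ∉ S, x i = 0 := by
  obtain ⟨S, hsupp, -, hcard⟩ := Finset.exists_subsuperset_card_eq
    (Finset.subset_univ _) hx (by simpa using hs)
  refine ⟨S, hcard, fun i hi => ?_⟩
  by_contra hxi
  exact hi (hsupp (by simpa using hxi))

theorem NSP.sum_abs_lt_of_mulVec_eq {m n s : ℕ} {A : Matrix (Fin m) (Fin n) ℝ}
    (hA : NSP s A) (hs : s ≤ n) {x z : Fin n → ℝ} (hx : SparseVec s x)
    (hAz : A *ᵥ z = A *ᵥ x) (hne : z ≠ x) :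
    ∑ i, |x i| < ∑ i, |z i| := by
  obtain ⟨S, hcard, hxS⟩ := SparseVec.exists_card_eq_of_le hx hs
  set w := x - z
  have hw : A *ᵥ w = 0 := by simp [w, mulVec_sub, hAz]
  have hw_ne : w ≠ 0 := sub_ne_zero.mpr hne.symm
  have hwz : ∀ i ∈ Sᶜ, |w i| = |z i| := fun i hi => by
    simp [w, hxS i (Finset.mem_compl.mp hi)]
  calc ∑ i, |x i| = ∑ i ∈ S, |x i| :=
        (Finset.sum_subset (Finset.subset_univ S) fun i _ hi => by simp [hxS i hi]).symm
    _ ≤ ∑ i ∈ S, (|z i| + |w i|) :=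
        Finset.sum_le_sum fun i _ => by simpa [w] using abs_add_le (z i) (w i)
    _ = ∑ i ∈ S, |z i| + ∑ i ∈ S, |w i| := Finset.sum_add_distrib
    _ < ∑ i ∈ S, |z i| + ∑ i ∈ Sᶜ, |w i| := by gcongr; exact hA w hw hw_ne S hcard
    _ = ∑ i, |z i| := by rw [Finset.sum_congr rfl hwz, Finset.sum_add_sum_compl]

theorem SparseMat.sparseVec_row {n₁ n₂ s : ℕ} {X : Matrix (Fin n₁) (Fin n₂) ℝ}
    (hX : SparseMat s X) (p : Fin n₁) : SparseVec s (X p) := by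
  refine le_trans ?_ hX
  refine Finset.card_le_card_of_injOn (fun j => (p, j)) (fun j hj => ?_) fun _ _ _ _ h => ?_
  · simpa using hj
  · exact congrArg Prod.snd h

theorem SparseMat.sparseVec_mulVec {n₁ n₂ s : ℕ} {X : Matrix (Fin n₁) (Fin n₂) ℝ}
    (hX : SparseMat s X) (v : Fin n₂ → ℝ) : SparseVec s (X *ᵥ v) := by
  refine le_trans (le_trans (Finset.card_le_card fun i hi => ?_) (Finset.card_image_le
    (f := Prod.fst))) hX
  obtain ⟨j, hj⟩ : ∃ j, X i j ≠ 0 := by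
    by_contra! h
    simp [mulVec, dotProduct, h] at hi
  exact Finset.mem_image.mpr ⟨(i, j), by simpa using hj, rfl⟩

theorem Matrix.mul_apply_col {l m n α : Type*} [Fintype m] [NonUnitalNonAssocSemiring α]
    (A : Matrix l m α) (B : Matrix m n α) (j : n) :
    (fun i => (A * B) i j) = A *ᵥ fun k => B k j :=
  rfl

/-- GTCS-S for matrices: with `Y = U1 X U2ᵀ` and `Z = X U2ᵀ`, each column of `Z` is
`s`-sparse and is the unique ℓ1-minimizer consistent with the corresponding column of
`Y` under `U1`; each row of `X` is `s`-sparse and is the unique ℓ1-minimizer consistent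
with the corresponding row of `Z` under `U2`. Hence `X` is recovered exactly. -/
theorem gtcs_s_matrix_recovery {N1 N2 m1 m2 s : ℕ}
    (hs1 : s ≤ N1) (hs2 : s ≤ N2)
    (X : Matrix (Fin N1) (Fin N2) ℝ) (hX : SparseMat s X)
    (U1 : Matrix (Fin m1) (Fin N1) ℝ) (U2 : Matrix (Fin m2) (Fin N2) ℝ)
    (hU1 : NSP s U1) (hU2 : NSP s U2) :
    (∀ q : Fin m2,
      SparseVec s (fun i => (X * U2.transpose) i q) ∧
      ∀ z : Fin N1 → ℝ,
        U1.mulVec z = (fun p => (U1 * X * U2.transpose) p q) →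
        z ≠ (fun i => (X * U2.transpose) i q) →
        ∑ i, |(X * U2.transpose) i q| < ∑ i, |z i|) ∧
    (∀ p : Fin N1,
      SparseVec s (fun j => X p j) ∧
      ∀ u : Fin N2 → ℝ,
        U2.mulVec u = (fun q => (X * U2.transpose) p q) →
        u ≠ (fun j => X p j) →
        ∑ j, |X p j| < ∑ j, |u j|) := by
  refine ⟨fun q => ?_, fun p => ?_⟩
  · have hcol : SparseVec s (fun i => (X * U2.transpose) i q) := by
      rw [mul_apply_col]
      exact SparseMat.sparseVec_mulVec hX _
    refine ⟨hcol, fun z hz hne => NSP.sum_abs_lt_of_mulVec_eq hU1 hs1 hcol ?_ hne⟩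
    rw [hz, Matrix.mul_assoc, mul_apply_col]
  · have hrow := SparseMat.sparseVec_row hX p
    refine ⟨hrow, fun u hu hne => NSP.sum_abs_lt_of_mulVec_eq hU2 hs2 hrow ?_ hne⟩
    rw [hu, ← vecMul_transpose]
    rfl
end

section
/- Let X be an N1×N2 matrix whose every row is s2-sparse and such that every column of X U2^T is s1-sparse. If U1 satisfies NSP_{s1} and U2 satisfies NSP_{s2}, then X can be uniquely recovered from Y = U1 X U2^T by the two-stage serial ℓ1-minimization procedure (first recovering the columns of X U2^T via U1, then the rows of X via U2). -/
lemma nsp_recovery {m n s : ℕ} (hs : s ≤ n) {A : Matrix (Fin m) (Fin n) ℝ}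
    (hA : NSP s A) {x : Fin n → ℝ} (hx : SparseVec s x)
    {z : Fin n → ℝ} (hz : A.mulVec z = A.mulVec x) (hne : z ≠ x) :
    ∑ i, |x i| < ∑ i, |z i| := by
  set w : Fin n → ℝ := x - z with hw
  have hker : A.mulVec w = 0 := by
    simp [hw, Matrix.mulVec_sub, hz]
  have hwne : w ≠ 0 := sub_ne_zero.mpr (fun h => hne h.symm)
  obtain ⟨S, hsub, -, hcard⟩ := Finset.exists_subsuperset_card_eq
    (Finset.subset_univ (Finset.univ.filter fun i => x i ≠ 0)) hx
    (by simpa using hs)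
  have hmain := hA w hker hwne S hcard
  have hx0 : ∀ i ∈ Sᶜ, x i = 0 := by
    intro i hi
    by_contra h
    exact (Finset.mem_compl.mp hi) (hsub (by simp [h]))
  have h1 : ∑ i, |x i| = ∑ i ∈ S, |x i| :=
    (Finset.sum_subset (Finset.subset_univ S)
      (fun i _ hi => by rw [hx0 i (Finset.mem_compl.mpr hi), abs_zero])).symm
  have h2 : ∀ i ∈ S, |x i| ≤ |z i| + |w i| := by
    intro i _
    have : x i = z i + w i := by simp [hw]
    rw [this]; exact abs_add_le _ _
  have h3 : ∀ i ∈ Sᶜ, |w i| = |z i| := by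
    intro i hi
    have : w i = -z i := by simp [hw, hx0 i hi]
    rw [this, abs_neg]
  calc ∑ i, |x i| = ∑ i ∈ S, |x i| := h1
    _ ≤ ∑ i ∈ S, (|z i| + |w i|) := Finset.sum_le_sum h2
    _ = ∑ i ∈ S, |z i| + ∑ i ∈ S, |w i| := Finset.sum_add_distrib
    _ < ∑ i ∈ S, |z i| + ∑ i ∈ Sᶜ, |w i| := by linarith
    _ = ∑ i ∈ S, |z i| + ∑ i ∈ Sᶜ, |z i| := by rw [Finset.sum_congr rfl h3]
    _ = ∑ i, |z i| := Finset.sum_add_sum_compl S _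


/-- Relaxed GTCS-S for matrices: if every row of `X` is `s2`-sparse, every column of
`X U2ᵀ` is `s1`-sparse, `U1` satisfies NSP of order `s1`, and `U2` satisfies NSP of
order `s2`, then `X` can be uniquely recovered from `Y = U1 X U2ᵀ` by the two-stage
serial ℓ1-minimization procedure: each column of `Z = X U2ᵀ` is the unique
ℓ1-minimizer consistent with the corresponding column of `Y` under `U1`, and each row
of `X` is the unique ℓ1-minimizer consistent with the corresponding row of `Z` under
`U2`. -/
theorem gtcs_s_relaxed_recovery {N1 N2 m1 m2 s1 s2 : ℕ}
    (hs1 : s1 ≤ N1) (hs2 : s2 ≤ N2)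
    (X : Matrix (Fin N1) (Fin N2) ℝ)
    (U1 : Matrix (Fin m1) (Fin N1) ℝ) (U2 : Matrix (Fin m2) (Fin N2) ℝ)
    (hXrow : ∀ p : Fin N1, SparseVec s2 (fun j => X p j))
    (hXcol : ∀ q : Fin m2, SparseVec s1 (fun i => (X * U2.transpose) i q))
    (hU1 : NSP s1 U1) (hU2 : NSP s2 U2) :
    (∀ q : Fin m2,
      ∀ z : Fin N1 → ℝ,
        U1.mulVec z = (fun p => (U1 * X * U2.transpose) p q) →
        z ≠ (fun i => (X * U2.transpose) i q) →
        ∑ i, |(X * U2.transpose) i q| < ∑ i, |z i|) ∧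
    (∀ p : Fin N1,
      ∀ u : Fin N2 → ℝ,
        U2.mulVec u = (fun q => (X * U2.transpose) p q) →
        u ≠ (fun j => X p j) →
        ∑ j, |X p j| < ∑ j, |u j|) := by
  have key1 : ∀ z : Fin N1 → ℝ, ∀ q, (fun p => (U1 * X * U2.transpose) p q) = U1.mulVec (fun i => (X * U2.transpose) i q) := by
    intro z q
    funext p
    simp only [Matrix.mulVec, Matrix.mul_apply, dotProduct, Finset.sum_mul, Finset.mul_sum]
    rw [Finset.sum_comm]
    apply Finset.sum_congr rfl; intros; apply Finset.sum_congr rfl; intros; ring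
  constructor
  · intro q z hz hne
    refine nsp_recovery hs1 hU1 (hXcol q) ?_ hne
    rw [hz, key1 z q]
  · intro p u hu hne
    refine nsp_recovery hs2 hU2 (hXrow p) ?_ hne
    rw [hu]
    funext q
    simp [Matrix.mulVec, Matrix.mul_apply, Matrix.transpose_apply, dotProduct, mul_comm]
end

section
/- Any s-sparse tensor 𝒳 ∈ R^{N1×…×Nd} admits a decomposition 𝒳 = Σ_{i=1}^K a_i^{(1)} ∘ … ∘ a_i^{(d)} with each a_i^{(j)} belonging to the column space R_j(𝒳) of the mode-j unfolding, and with K ≤ s^{d-1}. -/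
/-- A `d`-mode tensor is `s`-sparse if it has at most `s` nonzero entries. -/
def SparseTensor {d : ℕ} {N : Fin d → ℕ} (s : ℕ) (X : (∀ j, Fin (N j)) → ℝ) : Prop :=
  (Finset.univ.filter fun g : ∀ j, Fin (N j) => X g ≠ 0).card ≤ s

/-- The column space `R_i(X)` of the mode-`i` unfolding of `X`. -/
def colSpaceUnfold {d : ℕ} {N : Fin d → ℕ} (X : (∀ j, Fin (N j)) → ℝ) (i : Fin d) :
    Submodule ℝ (Fin (N i) → ℝ) :=
  Submodule.span ℝ (Set.range fun g : ∀ j, Fin (N j) => fun a => X (Function.update g i a))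

/-!
Every mode-`j` fiber of `X` lies in `R_j(X)`, a space of dimension `m_j ≤ s` because its vectors
vanish off the `≤ s` mode-`j` coordinates of the support of `X`. Choose a basis `w_{j,k}` of
`R_j(X)` and functionals `ψ_{j,k}` extending its coordinate maps; the matrix
`∑_k w_{j,k} ψ_{j,k}ᵀ` fixes `R_j(X)`, so multiplying `X` by it in every mode changes nothing.
Expanding the products gives the Tucker form `X = ∑_β c_β w_{1,β_1} ∘ ⋯ ∘ w_{d,β_d}`, and
collecting the terms that differ only in `β_{i₀}` merges mode `i₀` into a single vector of
`R_{i₀}(X)`, leaving `∏_{j ≠ i₀} m_j ≤ s^{d-1}` rank-one terms.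
-/

open Function Finset Module

namespace Equiv
variable {ι : Type*} [DecidableEq ι] {κ : ι → Type*} {i : ι} (x : κ i)
  (r : ∀ j : {j // j ≠ i}, κ j)

@[simp] theorem piSplitAt_symm_apply_self : (piSplitAt i κ).symm (x, r) i = x := by
  simp [piSplitAt_symm_apply]

@[simp] theorem piSplitAt_symm_apply_of_ne (j : {j // j ≠ i}) :
    (piSplitAt i κ).symm (x, r) j = r j := by
  simp [piSplitAt_symm_apply, j.2]

theorem update_piSplitAt_symm (y : κ i) :
    update ((piSplitAt i κ).symm (x, r)) i y = (piSplitAt i κ).symm (y, r) := by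
  funext j
  by_cases h : j = i
  · subst h; simp
  · simp [h, piSplitAt_symm_apply]

theorem prod_apply_piSplitAt_symm [Fintype ι] {M : Type*} [CommMonoid M] (F : ∀ j, κ j → M) :
    ∏ j, F j ((piSplitAt i κ).symm (x, r) j) = F i x * ∏ j : {j // j ≠ i}, F j (r j) := by
  rw [Fintype.prod_eq_mul_prod_subtype_ne _ i, piSplitAt_symm_apply_self]
  exact congrArg _ (Finset.prod_congr rfl fun j _ => by rw [piSplitAt_symm_apply_of_ne])

end Equiv

section ModeProduct

variable {ι : Type*} [Fintype ι] [DecidableEq ι] {κ : ι → Type*} [∀ i, Fintype (κ i)]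
  {R : Type*} [CommSemiring R]

/-- The mode-`i` product `Y ×ᵢ A`. -/
def modeProduct (i : ι) (A : κ i → κ i → R) (Y : (∀ j, κ j) → R) : (∀ j, κ j) → R :=
  fun g => ∑ a, A (g i) a * Y (update g i a)

theorem sum_mul_prod_update_of_modeProduct_eq (Y : (∀ j, κ j) → R) (K : ∀ j, κ j → κ j → R)
    (i : ι) (A : κ i → κ i → R) (hA : modeProduct i A Y = Y) (g : ∀ j, κ j) :
    ∑ h, Y h * ∏ j, update K i A j (g j) (h j) =
      ∑ r : ∀ j : {j // j ≠ i}, κ j,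
        Y ((Equiv.piSplitAt i κ).symm (g i, r)) * ∏ j : {j // j ≠ i}, K j (g j) (r j) := by
  rw [← (Equiv.piSplitAt i κ).symm.sum_comp, Fintype.sum_prod_type, sum_comm]
  refine sum_congr rfl fun r _ => ?_
  have hr := congrFun hA ((Equiv.piSplitAt i κ).symm (g i, r))
  simp only [modeProduct, Equiv.piSplitAt_symm_apply_self, Equiv.update_piSplitAt_symm] at hr
  simp_rw [Equiv.prod_apply_piSplitAt_symm, update_self, mul_left_comm _ (A _ _), ← mul_assoc,
    ← sum_mul, hr]
  exact congrArg _ (prod_congr rfl fun j _ => by rw [update_of_ne j.2])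

theorem eq_sum_mul_prod_of_modeProduct_eq [∀ i, DecidableEq (κ i)] (Y : (∀ j, κ j) → R)
    (K : ∀ j, κ j → κ j → R) (hK : ∀ j, modeProduct j (K j) Y = Y) (g : ∀ j, κ j) :
    Y g = ∑ h, Y h * ∏ j, K j (g j) (h j) := by
  let δ : ∀ j, κ j → κ j → R := fun _ x a => if x = a then 1 else 0
  have hδ : ∀ j, modeProduct j (δ j) Y = Y := fun j => funext fun g => by simp [modeProduct, δ]
  -- swap the identity kernel `δ j` for `K j` one mode at a time
  suffices h : ∀ E : Finset ι, Y g = ∑ h, Y h * ∏ j, E.piecewise K δ j (g j) (h j) by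
    simpa using h univ
  intro E
  induction E using Finset.induction_on with
  | empty => simp [δ, prod_boole, ← funext_iff]
  | insert j E hj ih =>
    have hP : E.piecewise K δ = update (E.piecewise K δ) j (δ j) := by
      rw [eq_comm, update_eq_self_iff, piecewise_eq_of_notMem _ _ _ hj]
    rw [piecewise_insert, sum_mul_prod_update_of_modeProduct_eq Y _ j _ (hK j), ih,
      ← sum_mul_prod_update_of_modeProduct_eq Y (E.piecewise K δ) j _ (hδ j), ← hP]

theorem sum_mul_prod_sum_mul_eq {ρ : ι → Type*} [∀ i, Fintype (ρ i)] (Y : (∀ j, κ j) → R)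
    (w ψ : ∀ j, ρ j → κ j → R) (g : ∀ j, κ j) :
    ∑ h, Y h * ∏ j, ∑ k, w j k (g j) * ψ j k (h j) =
      ∑ β : ∀ j, ρ j, (∑ h, Y h * ∏ j, ψ j (β j) (h j)) * ∏ j, w j (β j) (g j) := by
  simp_rw [Fintype.prod_sum, mul_sum, sum_mul]
  rw [sum_comm]
  refine sum_congr rfl fun β _ => sum_congr rfl fun h _ => ?_
  rw [mul_assoc, ← prod_mul_distrib]
  simp_rw [mul_comm]

end ModeProduct

section FunctionSpace

variable {𝕜 : Type*} [Field 𝕜] {n : Type*} [Fintype n]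

theorem Submodule.exists_reproducing_kernel [DecidableEq n] (V : Submodule 𝕜 (n → 𝕜)) :
    ∃ w ψ : Fin (finrank 𝕜 V) → n → 𝕜, (∀ k, w k ∈ V) ∧
      ∀ v ∈ V, ∀ x, ∑ a, (∑ k, w k x * ψ k a) * v a = v x := by
  let b := Module.finBasis 𝕜 V
  obtain ⟨f, hf⟩ := LinearMap.exists_extend b.equivFun.toLinearMap
  refine ⟨fun k => b k, fun k a => f (fun j => if a = j then 1 else 0) k, fun k => (b k).2,
    fun v hv x => ?_⟩
  have hfv : ∀ k, ∑ a, f (fun j => if a = j then 1 else 0) k * v a = b.repr ⟨v, hv⟩ k :=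
    fun k => by
      have hfv := LinearMap.congr_fun hf ⟨v, hv⟩
      simp only [LinearMap.comp_apply, Submodule.subtype_apply, f.pi_apply_eq_sum_univ v] at hfv
      simpa [mul_comm] using congrFun hfv k
  simp_rw [sum_mul, mul_assoc]
  rw [sum_comm]
  simp_rw [← mul_sum, hfv]
  have hrepr := congrArg (fun u : V => (u : n → 𝕜) x) (b.sum_repr ⟨v, hv⟩)
  simp only [Submodule.coe_sum, Submodule.coe_smul, Finset.sum_apply, Pi.smul_apply,
    smul_eq_mul] at hrepr
  simpa [mul_comm] using hrepr

theorem finrank_le_card_of_forall_notMem_eq_zero {V : Submodule 𝕜 (n → 𝕜)} (S : Finset n)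
    (hV : ∀ v ∈ V, ∀ b ∉ S, v b = 0) : finrank 𝕜 V ≤ S.card := by
  let ρ : V →ₗ[𝕜] (S → 𝕜) := LinearMap.funLeft 𝕜 𝕜 (Subtype.val : S → n) ∘ₗ V.subtype
  have hρ : Injective ρ := by
    rw [← LinearMap.ker_eq_bot, LinearMap.ker_eq_bot']
    intro v hv
    ext b
    by_cases hb : b ∈ S
    · exact congrFun hv ⟨b, hb⟩
    · exact hV v v.2 b hb
  simpa using LinearMap.finrank_le_finrank_of_injective hρ

end FunctionSpace

theorem exists_outer_decomposition_of_fiber_mem {𝕜 : Type*} [Field 𝕜] {ι : Type*} [Fintype ι]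
    [DecidableEq ι] {κ : ι → Type*} [∀ i, Fintype (κ i)] [∀ i, DecidableEq (κ i)]
    (V : ∀ j, Submodule 𝕜 (κ j → 𝕜)) (Y : (∀ j, κ j) → 𝕜)
    (hY : ∀ j g, (fun a => Y (update g j a)) ∈ V j) (i : ι) :
    ∃ a : (∀ j : {j // j ≠ i}, Fin (finrank 𝕜 (V j))) → ∀ j, κ j → 𝕜,
      (∀ β j, a β j ∈ V j) ∧ ∀ g, Y g = ∑ β, ∏ j, a β j (g j) := by
  choose w ψ hw hψ using fun j => (V j).exists_reproducing_kernel
  let c : (∀ j, Fin (finrank 𝕜 (V j))) → 𝕜 := fun β => ∑ h, Y h * ∏ j, ψ j (β j) (h j)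
  have htucker : ∀ g, Y g = ∑ β, c β * ∏ j, w j (β j) (g j) := fun g => by
    rw [eq_sum_mul_prod_of_modeProduct_eq Y (fun j x a => ∑ k, w j k x * ψ j k a) ?_ g,
      sum_mul_prod_sum_mul_eq]
    intro j
    funext g
    simpa [modeProduct] using hψ j _ (hY j g) (g j)
  let u : (∀ j : {j // j ≠ i}, Fin (finrank 𝕜 (V j))) → κ i → 𝕜 :=
    fun β => ∑ k, c ((Equiv.piSplitAt i _).symm (k, β)) • w i k
  refine ⟨fun β => (Equiv.piSplitAt i (fun j => κ j → 𝕜)).symm (u β, fun j => w j (β j)),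
    fun β j => ?_, fun g => ?_⟩
  · by_cases h : j = i
    · subst h
      dsimp only
      rw [Equiv.piSplitAt_symm_apply_self]
      exact sum_mem fun k _ => Submodule.smul_mem _ _ (hw _ k)
    · simp only [Equiv.piSplitAt_symm_apply, dif_neg h]
      exact hw j _
  · rw [htucker, ← (Equiv.piSplitAt i _).symm.sum_comp, Fintype.sum_prod_type, sum_comm]
    refine sum_congr rfl fun β _ => ?_
    have hw_split := fun k => Equiv.prod_apply_piSplitAt_symm k β (fun j k => w j k (g j))
    have hu_split := Equiv.prod_apply_piSplitAt_symm (κ := fun j => κ j → 𝕜) (u β)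
      (fun j => w j (β j)) (fun j v => v (g j))
    simp only [hw_split, hu_split, u, Finset.sum_apply, Pi.smul_apply, smul_eq_mul, sum_mul,
      mul_assoc]

theorem colSpaceUnfold_apply_eq_zero {d : ℕ} {N : Fin d → ℕ} (X : (∀ j, Fin (N j)) → ℝ)
    (j : Fin d) {v : Fin (N j) → ℝ} (hv : v ∈ colSpaceUnfold X j) {b : Fin (N j)}
    (hb : b ∉ (univ.filter fun g : ∀ j, Fin (N j) => X g ≠ 0).image (· j)) : v b = 0 := by
  induction hv using Submodule.span_induction with
  | mem _ hv =>
    obtain ⟨g, rfl⟩ := hv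
    by_contra hne
    exact hb (mem_image.mpr ⟨update g j b, by simpa using hne, update_self _ _ _⟩)
  | zero => rfl
  | add _ _ _ _ hv hw => simp [hv, hw]
  | smul _ _ _ hv => simp [hv]

theorem finrank_colSpaceUnfold_le {d : ℕ} {N : Fin d → ℕ} {s : ℕ} {X : (∀ j, Fin (N j)) → ℝ}
    (hX : SparseTensor s X) (j : Fin d) : finrank ℝ (colSpaceUnfold X j) ≤ s :=
  (finrank_le_card_of_forall_notMem_eq_zero _ fun _ hv _ hb =>
    colSpaceUnfold_apply_eq_zero X j hv hb).trans (card_image_le.trans hX)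

/-- Any `s`-sparse tensor `X` admits a decomposition
`X = ∑_{i=1}^K a_i^{(1)} ∘ … ∘ a_i^{(d)}` with each `a_i^{(j)}` in the column space
`R_j(X)` of the mode-`j` unfolding and `K ≤ s^(d-1)`. -/
theorem sparse_tensor_outer_decomposition {d : ℕ} {N : Fin d → ℕ} {s : ℕ}
    (hd : 1 ≤ d) (X : (∀ j, Fin (N j)) → ℝ) (hX : SparseTensor s X) :
    ∃ K : ℕ, K ≤ s ^ (d - 1) ∧
      ∃ a : Fin K → (j : Fin d) → (Fin (N j) → ℝ),
        (∀ i j, a i j ∈ colSpaceUnfold X j) ∧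
        ∀ g : ∀ j, Fin (N j), X g = ∑ i : Fin K, ∏ j, a i j (g j) := by
  let i₀ : Fin d := ⟨0, hd⟩
  obtain ⟨a, ha, hXa⟩ := exists_outer_decomposition_of_fiber_mem (colSpaceUnfold X) X
    (fun j g => Submodule.subset_span ⟨g, rfl⟩) i₀
  let e := Fintype.equivFin (∀ j : {j // j ≠ i₀}, Fin (finrank ℝ (colSpaceUnfold X j)))
  refine ⟨_, ?_, fun k => a (e.symm k), fun k => ha _, fun g => by rw [hXa g, ← e.symm.sum_comp]⟩
  calc Fintype.card (∀ j : {j // j ≠ i₀}, Fin (finrank ℝ (colSpaceUnfold X j)))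
      = ∏ j : {j // j ≠ i₀}, finrank ℝ (colSpaceUnfold X j) := by simp
    _ ≤ s ^ Fintype.card {j // j ≠ i₀} :=
      prod_le_pow_card _ _ _ fun j _ => finrank_colSpaceUnfold_le hX j
    _ = s ^ (d - 1) := by simp
end

section
/- GTCS-P exact recovery for tensors: Let 𝒳 ∈ R^{N1×…×Nd} be s-sparse and let each U_j ∈ R^{m_j×N_j} satisfy NSP_s. Set 𝒴 = 𝒳 ×_1 U_1 ⋯ ×_d U_d. For any decomposition 𝒴 = Σ_{i=1}^K b_i^{(1)} ∘ … ∘ b_i^{(d)} with b_i^{(j)} ∈ U_j R_j(𝒳), let w_i^{(j)} ∈ R_j(𝒳) be the unique vector with U_j w_i^{(j)} = b_i^{(j)}. Then 𝒳 = Σ_{i=1}^K w_i^{(1)} ∘ … ∘ w_i^{(d)}. -/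
/-- The multi-mode product `X ×₁ U 1 ×₂ U 2 ⋯ ×_d U d`. -/
def modeProdAll {d : ℕ} {N M : Fin d → ℕ}
    (U : ∀ j, Matrix (Fin (M j)) (Fin (N j)) ℝ) (X : (∀ j, Fin (N j)) → ℝ) :
    (∀ j, Fin (M j)) → ℝ :=
  fun k => ∑ g : ∀ j, Fin (N j), (∏ j, U j (k j) (g j)) * X g


section Aux

/-- Partial multi-mode product with square matrices applied only on modes in `t`. -/
noncomputable def partialProd {d : ℕ} {N : Fin d → ℕ}
    (C : ∀ j, Matrix (Fin (N j)) (Fin (N j)) ℝ) (Z : (∀ j, Fin (N j)) → ℝ)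
    (t : Finset (Fin d)) : (∀ j, Fin (N j)) → ℝ :=
  fun k => ∑ g : ∀ j, Fin (N j), (∏ j ∈ t, C j (k j) (g j)) *
    ((∏ j ∈ tᶜ, if g j = k j then (1:ℝ) else 0) * Z g)

lemma partialProd_empty {d : ℕ} {N : Fin d → ℕ}
    (C : ∀ j, Matrix (Fin (N j)) (Fin (N j)) ℝ) (Z : (∀ j, Fin (N j)) → ℝ) :
    partialProd C Z ∅ = Z := by
  funext k
  unfold partialProd
  rw [Fintype.sum_eq_single k]
  · simp
  · intro g hg
    obtain ⟨j, hj⟩ := Function.ne_iff.mp hg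
    have h0 : (∏ j ∈ (∅:Finset (Fin d))ᶜ, if g j = k j then (1:ℝ) else 0) = 0 := by
      apply Finset.prod_eq_zero (Finset.mem_compl.2 (Finset.notMem_empty j))
      simp [hj]
    rw [Finset.prod_empty, one_mul, h0, zero_mul]

lemma partialProd_insert {d : ℕ} {N : Fin d → ℕ}
    (C : ∀ j, Matrix (Fin (N j)) (Fin (N j)) ℝ) (Z : (∀ j, Fin (N j)) → ℝ)
    {t : Finset (Fin d)} {j : Fin d} (hj : j ∉ t) (k : ∀ j, Fin (N j)) :
    partialProd C Z (insert j t) k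
      = ∑ a : Fin (N j), C j (k j) a * partialProd C Z t (Function.update k j a) := by
  unfold partialProd
  simp_rw [Finset.mul_sum]
  rw [Finset.sum_comm]
  refine Finset.sum_congr rfl fun g _ => ?_
  have hju : j ∈ tᶜ := Finset.mem_compl.2 hj
  have key : ∀ a : Fin (N j),
      (∏ l ∈ t, C l (Function.update k j a l) (g l)) = ∏ l ∈ t, C l (k l) (g l) := by
    intro a
    refine Finset.prod_congr rfl fun l hl => ?_
    have hlj : l ≠ j := by rintro rfl; exact hj hl
    rw [Function.update_of_ne hlj]
  have key2 : ∀ a : Fin (N j),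
      (∏ l ∈ tᶜ, if g l = Function.update k j a l then (1:ℝ) else 0)
        = (if g j = a then (1:ℝ) else 0) *
          ∏ l ∈ tᶜ.erase j, if g l = k l then (1:ℝ) else 0 := by
    intro a
    rw [← Finset.mul_prod_erase _ _ hju, Function.update_self]
    congr 1
    refine Finset.prod_congr rfl fun l hl => ?_
    rw [Function.update_of_ne (Finset.ne_of_mem_erase hl)]
  simp_rw [key, key2]
  rw [Fintype.sum_eq_single (g j)]
  · rw [Finset.prod_insert hj, Finset.compl_insert, if_pos rfl]
    ring
  · intro a ha
    simp [Ne.symm ha]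

lemma partialProd_univ {d : ℕ} {N : Fin d → ℕ}
    (C : ∀ j, Matrix (Fin (N j)) (Fin (N j)) ℝ) (Z : (∀ j, Fin (N j)) → ℝ) :
    partialProd C Z Finset.univ = modeProdAll C Z := by
  funext k
  unfold partialProd modeProdAll
  simp

lemma partialProd_eq_self {d : ℕ} {N : Fin d → ℕ}
    (C : ∀ j, Matrix (Fin (N j)) (Fin (N j)) ℝ) (Z : (∀ j, Fin (N j)) → ℝ)
    (hC : ∀ j (k : ∀ j, Fin (N j)),
      (C j).mulVec (fun a => Z (Function.update k j a)) = fun a => Z (Function.update k j a)) :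
    ∀ t : Finset (Fin d), partialProd C Z t = Z := by
  intro t
  induction t using Finset.induction with
  | empty => exact partialProd_empty C Z
  | @insert j t hj ih =>
    funext k
    rw [partialProd_insert C Z hj k]
    simp only [ih]
    have h1 := congrFun (hC j k) (k j)
    simp only [Matrix.mulVec, dotProduct] at h1
    rw [h1, Function.update_eq_self]

lemma modeProdAll_comp {d : ℕ} {N M P : Fin d → ℕ}
    (V : ∀ j, Matrix (Fin (P j)) (Fin (M j)) ℝ)
    (U : ∀ j, Matrix (Fin (M j)) (Fin (N j)) ℝ)
    (Z : (∀ j, Fin (N j)) → ℝ) :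
    modeProdAll V (modeProdAll U Z) = modeProdAll (fun j => V j * U j) Z := by
  funext k
  unfold modeProdAll
  simp_rw [Finset.mul_sum]
  rw [Finset.sum_comm]
  refine Finset.sum_congr rfl fun g _ => ?_
  have h : (∏ j, (V j * U j) (k j) (g j))
      = ∑ h : ∀ j, Fin (M j), ∏ j, V j (k j) (h j) * U j (h j) (g j) := by
    simp_rw [Matrix.mul_apply]
    rw [Finset.prod_univ_sum]
    simp [Fintype.piFinset_univ]
  rw [h, Finset.sum_mul]
  refine Finset.sum_congr rfl fun h _ => ?_
  rw [Finset.prod_mul_distrib]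
  ring

lemma modeProdAll_outer {d : ℕ} {N M : Fin d → ℕ}
    (U : ∀ j, Matrix (Fin (M j)) (Fin (N j)) ℝ) (v : ∀ j, Fin (N j) → ℝ)
    (k : ∀ j, Fin (M j)) :
    modeProdAll U (fun g => ∏ j, v j (g j)) k = ∏ j, (U j).mulVec (v j) (k j) := by
  unfold modeProdAll
  simp_rw [Matrix.mulVec, dotProduct]
  rw [Finset.prod_univ_sum]
  simp only [Fintype.piFinset_univ]
  refine Finset.sum_congr rfl fun g _ => ?_
  rw [Finset.prod_mul_distrib]

/-- Submodule of vectors supported on a finite index set `T`. -/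
def suppSubmodule {n : ℕ} (T : Finset (Fin n)) : Submodule ℝ (Fin n → ℝ) where
  carrier := {x | ∀ a ∉ T, x a = 0}
  add_mem' := by intro x y hx hy a ha; simp [hx a ha, hy a ha]
  zero_mem' := by intro a ha; rfl
  smul_mem' := by intro c x hx a ha; simp [hx a ha]

end Aux

/-- GTCS-P exact recovery for tensors: if `Y = X ×₁ U 1 ⋯ ×_d U d` decomposes as
`Y = ∑ i, b i 1 ∘ … ∘ b i d` with `b i j ∈ U j R_j(X)`, and `w i j ∈ R_j(X)` satisfies
`U j (w i j) = b i j`, then `X = ∑ i, w i 1 ∘ … ∘ w i d`. -/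
theorem gtcs_p_tensor_recovery {d : ℕ} {N M : Fin d → ℕ} {s K : ℕ}
    (hs : ∀ j, s ≤ N j)
    (X : (∀ j, Fin (N j)) → ℝ) (hX : SparseTensor s X)
    (U : ∀ j, Matrix (Fin (M j)) (Fin (N j)) ℝ)
    (hU : ∀ j, NSP s (U j))
    (b : Fin K → (j : Fin d) → (Fin (M j) → ℝ))
    (hb : ∀ i j, b i j ∈ (colSpaceUnfold X j).map (U j).mulVecLin)
    (hYdec : ∀ k : ∀ j, Fin (M j),
      modeProdAll U X k = ∑ i : Fin K, ∏ j, b i j (k j))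
    (w : Fin K → (j : Fin d) → (Fin (N j) → ℝ))
    (hwmem : ∀ i j, w i j ∈ colSpaceUnfold X j)
    (hweq : ∀ i j, (U j).mulVec (w i j) = b i j) :
    ∀ g : ∀ j, Fin (N j), X g = ∑ i : Fin K, ∏ j, w i j (g j) := by
  classical
  -- support sets
  set T : ∀ j, Finset (Fin (N j)) :=
    fun j => (Finset.univ.filter fun g : ∀ j, Fin (N j) => X g ≠ 0).image (fun g => g j) with hTdef
  have hTcard : ∀ j, (T j).card ≤ s :=
    fun j => le_trans (Finset.card_image_le) hX
  -- every element of the column space is supported on T j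
  have hsupp : ∀ j, ∀ x ∈ colSpaceUnfold X j, ∀ a ∉ T j, x a = 0 := by
    intro j
    have hle : colSpaceUnfold X j ≤ suppSubmodule (T j) := by
      apply Submodule.span_le.2
      rintro _ ⟨g, rfl⟩ a ha
      by_contra hx
      exact ha (Finset.mem_image.2 ⟨Function.update g j a,
        Finset.mem_filter.2 ⟨Finset.mem_univ _, hx⟩, Function.update_self _ _ _⟩)
    exact fun x hx => hle hx
  -- injectivity of U j on the column space
  have hinj : ∀ j, ∀ x ∈ colSpaceUnfold X j, (U j).mulVec x = 0 → x = 0 := by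
    intro j x hx hUx
    by_contra hx0
    obtain ⟨S, hTS, hScard⟩ := Finset.exists_superset_card_eq (le_trans (hTcard j) (le_refl s))
      (by simpa using hs j)
    have hlt := hU j x hUx hx0 S hScard
    have hzero : ∑ i ∈ Sᶜ, |x i| = 0 := by
      apply Finset.sum_eq_zero
      intro a ha
      have : a ∉ T j := fun h => (Finset.mem_compl.1 ha) (hTS h)
      rw [hsupp j x hx a this, abs_zero]
    rw [hzero] at hlt
    exact absurd hlt (not_lt.2 (Finset.sum_nonneg fun i _ => abs_nonneg _))
  -- left inverse matrices
  have hV : ∀ j, ∃ V : Matrix (Fin (N j)) (Fin (M j)) ℝ,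
      ∀ x ∈ colSpaceUnfold X j, V.mulVec ((U j).mulVec x) = x := by
    intro j
    set f : colSpaceUnfold X j →ₗ[ℝ] (Fin (M j) → ℝ) :=
      (U j).mulVecLin.comp (colSpaceUnfold X j).subtype with hf
    have hker : LinearMap.ker f = ⊥ := by
      rw [LinearMap.ker_eq_bot']
      rintro ⟨x, hx⟩ hfx
      have : (U j).mulVec x = 0 := hfx
      exact Subtype.ext (hinj j x hx this)
    obtain ⟨g, hg⟩ := LinearMap.exists_leftInverse_of_injective f hker
    refine ⟨LinearMap.toMatrix' (LinearMap.comp (colSpaceUnfold X j).subtype g), fun x hx => ?_⟩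
    have h1 : ∀ v, (LinearMap.toMatrix' (LinearMap.comp (colSpaceUnfold X j).subtype g)).mulVec v
        = (colSpaceUnfold X j).subtype (g v) := by
      intro v
      rw [← Matrix.toLin'_apply, Matrix.toLin'_toMatrix']
      rfl
    rw [h1]
    have h2 : (U j).mulVec x = f ⟨x, hx⟩ := rfl
    rw [h2]
    have := congrArg (fun (φ : colSpaceUnfold X j →ₗ[ℝ] colSpaceUnfold X j) => φ ⟨x, hx⟩) hg
    simp only [LinearMap.comp_apply, LinearMap.id_apply] at this
    exact congrArg Subtype.val this
  choose V hVspec using hV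
  -- residual tensor
  set Z : (∀ j, Fin (N j)) → ℝ :=
    fun g => X g - ∑ i : Fin K, ∏ j, w i j (g j) with hZdef
  -- fibers of Z lie in the column spaces
  have hfiber : ∀ j (k : ∀ j, Fin (N j)),
      (fun a => Z (Function.update k j a)) ∈ colSpaceUnfold X j := by
    intro j k
    have hrw : (fun a => Z (Function.update k j a))
        = (fun a => X (Function.update k j a))
          - ∑ i : Fin K, (∏ l ∈ Finset.univ.erase j, w i l (k l)) • w i j := by
      funext a
      simp only [hZdef, Pi.sub_apply, Finset.sum_apply, Pi.smul_apply, smul_eq_mul]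
      congr 1
      refine Finset.sum_congr rfl fun i _ => ?_
      rw [← Finset.mul_prod_erase Finset.univ _ (Finset.mem_univ j), Function.update_self]
      rw [mul_comm]
      congr 1
      refine Finset.prod_congr rfl fun l hl => ?_
      rw [Function.update_of_ne (Finset.ne_of_mem_erase hl)]
    rw [hrw]
    apply Submodule.sub_mem
    · exact Submodule.subset_span ⟨k, rfl⟩
    · exact Submodule.sum_mem _ fun i _ => Submodule.smul_mem _ _ (hwmem i j)
  -- measurements of Z vanish
  have hZ0 : modeProdAll U Z = 0 := by
    funext k
    have hlin : modeProdAll U Z k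
        = modeProdAll U X k - ∑ i : Fin K, modeProdAll U (fun g => ∏ j, w i j (g j)) k := by
      unfold modeProdAll
      simp only [hZdef, mul_sub, Finset.mul_sum]
      rw [Finset.sum_sub_distrib, Finset.sum_comm]
    rw [hlin, hYdec k]
    have : ∀ i, modeProdAll U (fun g => ∏ j, w i j (g j)) k = ∏ j, b i j (k j) := by
      intro i
      rw [modeProdAll_outer]
      refine Finset.prod_congr rfl fun j _ => ?_
      rw [hweq i j]
    simp only [this]
    simp
  -- conclude Z = 0
  set C : ∀ j, Matrix (Fin (N j)) (Fin (N j)) ℝ := fun j => V j * (U j) with hCdef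
  have hCfix : ∀ j (k : ∀ j, Fin (N j)),
      (C j).mulVec (fun a => Z (Function.update k j a)) = fun a => Z (Function.update k j a) := by
    intro j k
    rw [hCdef]
    rw [← Matrix.mulVec_mulVec]
    exact hVspec j _ (hfiber j k)
  have hCZ : modeProdAll C Z = Z := by
    rw [← partialProd_univ, partialProd_eq_self C Z hCfix]
  have hZzero : Z = 0 := by
    rw [← hCZ, hCdef, ← modeProdAll_comp V U Z, hZ0]
    funext k
    unfold modeProdAll
    simp
  intro g
  have := congrFun hZzero g
  simp only [hZdef, Pi.zero_apply] at this
  linarith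
end
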